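/- arXiv:1103.6138 — 3 statements merged into one kernel-verified Lean document; each statement's English description precedes it below -/
import Mathlib

section
/- Let G be a finite group of odd order whose commutator subgroup G' is cyclic of order 21 and is not contained in Z(G). Then |G : C_G(G')| = 3, |G' ∩ Z(G)| = 3, and exactly one of the following holds: (a) |Cl_G(x)| = 21 for all x ∈ G \ C_G(G'); or (b) there exists a subset X of G \ C_G(G') with |X| = 2·|Z(C_G(G'))| such that |Cl_G(x)| = 7 for all x ∈ X and |Cl_G(x)| = 21 for all x ∈ G \ (C_G(G') ∪ X). -/
open scoped commutatorElement

section AuxLemmas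

variable {G : Type*} [Group G]

theorem aux_centralizer_normal (N : Subgroup G) [hN : N.Normal] :
    (Subgroup.centralizer (N : Set G)).Normal := by
  constructor
  intro a ha b
  rw [Subgroup.mem_centralizer_iff] at ha ⊢
  intro h hh
  have h1 : b⁻¹ * h * b ∈ N := by simpa [mul_assoc] using hN.conj_mem h hh b⁻¹
  have h2 := ha _ h1
  calc h * (b * a * b⁻¹) = b * ((b⁻¹ * h * b) * a) * b⁻¹ := by group
    _ = b * (a * (b⁻¹ * h * b)) * b⁻¹ := by rw [h2]
    _ = (b * a * b⁻¹) * h := by group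

theorem aux_ker_conjNormal (N : Subgroup G) [hN : N.Normal] :
    (MulAut.conjNormal (H := N)).ker = Subgroup.centralizer (N : Set G) := by
  ext a
  simp only [MonoidHom.mem_ker, Subgroup.mem_centralizer_iff]
  constructor
  · intro h1 h hh
    have := congrArg (Subtype.val) (MulEquiv.ext_iff.mp h1 ⟨h, hh⟩)
    simp only [MulAut.conjNormal_apply, MulAut.one_apply] at this
    conv_lhs => rw [← this]
    group
  · intro h1
    ext ⟨h, hh⟩
    simp only [MulAut.conjNormal_apply, MulAut.one_apply]
    rw [mul_inv_eq_iff_eq_mul]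
    exact (h1 h hh).symm

theorem aux_index_three {G : Type*} [Group G] [Finite G] (hodd : Odd (Nat.card G))
    (hcyc : IsCyclic ↥(commutator G))
    (hcard : Nat.card ↥(commutator G) = 21)
    (hns : ¬ commutator G ≤ Subgroup.center G) :
    (Subgroup.centralizer (commutator G : Set G)).index = 3 := by
  have h12 : Nat.card (MulAut ↥(commutator G)) = 12 := by
    rw [IsCyclic.card_mulAut, hcard]; decide
  have hker := aux_ker_conjNormal (commutator G)
  have hdvd : (Subgroup.centralizer (commutator G : Set G)).index ∣ 12 := by
    rw [← hker, Subgroup.index_ker]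
    have h1 := Subgroup.card_dvd_of_le (le_top (a := (MulAut.conjNormal (H := commutator G)).range))
    rwa [Subgroup.card_top, h12] at h1
  have hoddi : ¬ (2 ∣ (Subgroup.centralizer (commutator G : Set G)).index) := by
    intro h2
    rw [← Nat.not_even_iff_odd, even_iff_two_dvd] at hodd
    exact hodd (h2.trans (Subgroup.index_dvd_card _))
  have hne1 : (Subgroup.centralizer (commutator G : Set G)).index ≠ 1 := by
    intro h1
    rw [Subgroup.index_eq_one] at h1
    apply hns
    intro h hh
    rw [Subgroup.mem_center_iff]
    intro a
    have ha : a ∈ Subgroup.centralizer (commutator G : Set G) := h1 ▸ Subgroup.mem_top a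
    exact (Subgroup.mem_centralizer_iff.mp ha h hh).symm
  have h3 : (Subgroup.centralizer (commutator G : Set G)).index ∣ 3 := by
    have hcop : (Nat.Coprime (Subgroup.centralizer (commutator G : Set G)).index 4) := by
      have : Nat.Coprime (Subgroup.centralizer (commutator G : Set G)).index 2 :=
        Nat.coprime_comm.mp ((Nat.prime_two.coprime_iff_not_dvd).mpr hoddi)
      simpa using this.pow_right 2
    exact Nat.Coprime.dvd_of_dvd_mul_right hcop (by simpa using hdvd)
  rcases (Nat.prime_three.eq_one_or_self_of_dvd _ h3) with h | h
  · exact absurd h hne1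
  · exact h

end AuxLemmas

set_option maxHeartbeats 1000000

/-- Let `G` be a finite group of odd order whose commutator subgroup
`G'` is cyclic of order `21` and not contained in `Z(G)`. Then `|G : C_G(G')| = 3`,
`|G' ∩ Z(G)| = 3`, and exactly one of the following holds:
(a) `|Cl_G(x)| = 21` for all `x ∈ G \ C_G(G')`; or
(b) there is a subset `X ⊆ G \ C_G(G')` with `|X| = 2|Z(C_G(G'))|` such that
`|Cl_G(x)| = 7` for all `x ∈ X` and `|Cl_G(x)| = 21` for all `x ∈ G \ (C_G(G') ∪ X)`. -/
theorem commutator_cyclic_card_twentyone (G : Type*) [Group G] [Finite G]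
    (hodd : Odd (Nat.card G))
    (hcyc : IsCyclic ↥(commutator G))
    (hcard : Nat.card ↥(commutator G) = 21)
    (hns : ¬ commutator G ≤ Subgroup.center G) :
    (Subgroup.centralizer (commutator G : Set G)).index = 3 ∧
    Nat.card ↥(commutator G ⊓ Subgroup.center G) = 3 ∧
    Xor'
      (∀ x : G, x ∉ Subgroup.centralizer (commutator G : Set G) →
        Nat.card (MulAction.orbit (ConjAct G) x) = 21)
      (∃ X : Set G,
        X ⊆ {x : G | x ∉ Subgroup.centralizer (commutator G : Set G)} ∧
        Nat.card X =
          2 * Nat.card (Subgroup.center ↥(Subgroup.centralizer (commutator G : Set G))) ∧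
        (∀ x ∈ X, Nat.card (MulAction.orbit (ConjAct G) x) = 7) ∧
        (∀ x : G, x ∉ Subgroup.centralizer (commutator G : Set G) → x ∉ X →
          Nat.card (MulAction.orbit (ConjAct G) x) = 21)) := by
  classical
  set N := commutator G with hNdef
  set C := Subgroup.centralizer (N : Set G) with hCdef
  haveI hNnorm : N.Normal := inferInstance
  haveI hCnorm : C.Normal := aux_centralizer_normal N
  have hidx : C.index = 3 := aux_index_three hodd hcyc hcard hns
  -- generator of N
  obtain ⟨g, hgN, horder, hgen⟩ :
      ∃ g : G, g ∈ N ∧ orderOf g = 21 ∧ ∀ h ∈ N, ∃ k : ℤ, g ^ k = h := by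
    obtain ⟨gN, hgen0⟩ := hcyc.exists_generator
    have htop : Subgroup.zpowers gN = ⊤ := by
      rw [eq_top_iff]; intro z _; exact hgen0 z
    have h1 : orderOf gN = 21 := by
      rw [← Nat.card_zpowers, htop, Subgroup.card_top, hcard]
    refine ⟨(gN : G), gN.2, ?_, ?_⟩
    · rw [Subgroup.orderOf_coe, h1]
    · intro h hh
      obtain ⟨k, hk⟩ := Subgroup.mem_zpowers_iff.mp (hgen0 ⟨h, hh⟩)
      refine ⟨k, ?_⟩
      have := congrArg Subtype.val hk
      simpa using this
  have hgpow : ∀ k : ℤ, g ^ k ∈ N := fun k => N.zpow_mem hgN k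
  have hcent : ∀ c ∈ C, ∀ n ∈ N, n * c = c * n := fun c hc n hn =>
    Subgroup.mem_centralizer_iff.mp hc n hn
  have hcomN : ∀ a b : G, ⁅a, b⁆ ∈ N := fun a b => by
    rw [hNdef, commutator_def]
    exact Subgroup.commutator_mem_commutator (Subgroup.mem_top a) (Subgroup.mem_top b)
  have hcentconj : ∀ c ∈ C, ∀ n ∈ N, c * n * c⁻¹ = n := by
    intro c hc n hn
    rw [← hcent c hc n hn]
    group
  have hCg : ∀ a : G, a ∈ C ↔ g * a = a * g := by
    intro a
    constructor
    · intro ha; exact hcent a ha g hgN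
    · intro hag
      rw [hCdef, Subgroup.mem_centralizer_iff]
      intro h hh
      obtain ⟨k, hk⟩ := hgen h hh
      rw [← hk]
      exact (Commute.zpow_left hag k)
  have hNC : N ≤ C := by
    intro n hn
    rw [hCg]
    obtain ⟨k, hk⟩ := hgen n hn
    rw [← hk]
    exact (Commute.refl g).zpow_right k
  -- quotient facts
  have hcard3 : Nat.card (G ⧸ C) = 3 := by
    rw [← Subgroup.index_eq_card, hidx]
  have hq3 : ∀ y : G, (QuotientGroup.mk y : G ⧸ C) ^ (3:ℕ) = 1 := by
    intro y
    apply orderOf_dvd_iff_pow_eq_one.mp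
    rw [← hcard3]
    exact orderOf_dvd_natCard _
  have hdec : ∀ y ∉ C, ∀ a : G, ∃ c, c ∈ C ∧ ∃ k : ℤ, a = c * y ^ k := by
    intro y hy a
    have hord : orderOf (QuotientGroup.mk y : G ⧸ C) = 3 := by
      have hdvd := orderOf_dvd_natCard (QuotientGroup.mk y : G ⧸ C)
      rw [hcard3] at hdvd
      rcases Nat.prime_three.eq_one_or_self_of_dvd _ hdvd with h | h
      · exfalso
        rw [orderOf_eq_one_iff] at h
        exact hy (QuotientGroup.eq_one_iff y |>.mp h)
      · exact h
    have htop : Subgroup.zpowers (QuotientGroup.mk y : G ⧸ C) = ⊤ :=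
      Subgroup.eq_top_of_card_eq _ (by rw [Nat.card_zpowers, hord, hcard3])
    obtain ⟨k, hk⟩ := Subgroup.mem_zpowers_iff.mp
      (htop ▸ Subgroup.mem_top (QuotientGroup.mk a : G ⧸ C))
    have hmem : (y ^ k)⁻¹ * a ∈ C := by
      rw [← QuotientGroup.eq]
      rw [← hk]
      exact (QuotientGroup.mk_zpow C y k).symm
    refine ⟨a * (y ^ k)⁻¹, ?_, k, by group⟩
    have : a * (y ^ k)⁻¹ = y ^ k * ((y ^ k)⁻¹ * a) * (y ^ k)⁻¹ := by group
    rw [this]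
    exact hCnorm.conj_mem _ hmem _
  have hsq : ∀ y ∉ C, y * y ∉ C := by
    intro y hy hyy
    apply hy
    have h2 : (QuotientGroup.mk y : G ⧸ C) ^ (2:ℕ) = 1 := by
      rw [pow_two, ← QuotientGroup.mk_mul]
      exact (QuotientGroup.eq_one_iff _).mpr hyy
    have : (QuotientGroup.mk y : G ⧸ C) = 1 := by
      have := hq3 y
      calc (QuotientGroup.mk y : G ⧸ C)
          = (QuotientGroup.mk y : G ⧸ C) ^ (3:ℕ) * ((QuotientGroup.mk y : G ⧸ C) ^ (2:ℕ))⁻¹ := by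
            group
        _ = 1 := by rw [this, h2]; group
    exact (QuotientGroup.eq_one_iff y).mp this
  -- ZMod translation
  have hzm : ∀ m k : ℤ, g ^ m = g ^ k ↔ ((m : ZMod 21) = (k : ZMod 21)) := by
    intro m k
    rw [zpow_eq_zpow_iff_modEq, horder, ← ZMod.intCast_eq_intCast_iff]
  have hconj : ∀ (a : G) (u : ℤ), a⁻¹ * g * a = g ^ u → ∀ t : ℤ, a⁻¹ * g ^ t * a = g ^ (u * t) := by
    intro a u hu t
    have h1 := map_zpow (MulAut.conj a⁻¹) g t
    simp only [MulAut.conj_apply, inv_inv] at h1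
    rw [h1, hu, ← zpow_mul]
  have hexp : ∀ y, y ∉ C → ∃ w : ℤ,
      y⁻¹ * g * y = g ^ w ∧ ((w : ZMod 21) ^ 3 = 1) ∧ ((w : ZMod 21) ≠ 1) := by
    intro y hy
    obtain ⟨w, hw⟩ : ∃ w : ℤ, g ^ w = y⁻¹ * g * y := by
      apply hgen
      have := hNnorm.conj_mem g hgN y⁻¹
      simpa [mul_assoc] using this
    refine ⟨w, hw.symm, ?_, ?_⟩
    · have hy3 : y * y * y ∈ C := by
        have h3 := hq3 y
        have : ((y * y * y : G) : G ⧸ C) = 1 := by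
          rw [show ((y * y * y : G) : G ⧸ C) = (QuotientGroup.mk y : G ⧸ C) ^ (3:ℕ) by
            simp [pow_succ, pow_two]]
          exact h3
        exact (QuotientGroup.eq_one_iff _).mp this
      have e1 : y⁻¹ * g * y = g ^ w := hw.symm
      have e2 : y⁻¹ * g ^ w * y = g ^ (w * w) := hconj y w e1 w
      have e3 : y⁻¹ * g ^ (w * w) * y = g ^ (w * (w * w)) := hconj y w e1 (w * w)
      have hfix : (y * y * y)⁻¹ * g * (y * y * y) = g := by
        have := hcent _ hy3 g hgN
        calc (y * y * y)⁻¹ * g * (y * y * y) = (y*y*y)⁻¹ * (g * (y*y*y)) := by group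
          _ = (y*y*y)⁻¹ * ((y*y*y) * g) := by rw [← this]
          _ = g := by group
      have hpow : (y * y * y)⁻¹ * g * (y * y * y) = g ^ (w * (w * w)) := by
        calc (y * y * y)⁻¹ * g * (y * y * y)
            = y⁻¹ * (y⁻¹ * (y⁻¹ * g * y) * y) * y := by group
          _ = y⁻¹ * (y⁻¹ * g ^ w * y) * y := by rw [e1]
          _ = y⁻¹ * g ^ (w * w) * y := by rw [e2]
          _ = g ^ (w * (w * w)) := e3
      have : g ^ (w * (w * w)) = g ^ (1:ℤ) := by
        rw [← hpow, hfix]; group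
      have hzz := (hzm _ _).mp this
      push_cast at hzz
      rw [show ((w:ZMod 21) ^ 3 = (w:ZMod 21) * ((w:ZMod 21) * (w:ZMod 21))) by ring]
      exact hzz
    · intro hw1
      apply hy
      have : g ^ w = g ^ (1:ℤ) := by
        rw [hzm]
        push_cast
        exact hw1
      rw [this] at hw
      rw [hCg]
      have : y⁻¹ * g * y = g := by rw [← hw]; group
      calc g * y = y * (y⁻¹ * g * y) := by group
        _ = y * g := by rw [this]
  -- the Sylow-7 subgroup P of N
  set P : Subgroup G := Subgroup.zpowers (g ^ (3:ℕ)) with hPdef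
  have hg3 : (g:G) ^ (3:ℕ) = g ^ (3:ℤ) := by
    rw [← zpow_natCast]; norm_num
  have hPmem : ∀ p, p ∈ P ↔ ∃ k : ℤ, g ^ (3 * k) = p := by
    intro p
    rw [hPdef, Subgroup.mem_zpowers_iff]
    constructor
    · rintro ⟨k, hk⟩
      exact ⟨k, by rw [← hk, hg3, ← zpow_mul]⟩
    · rintro ⟨k, hk⟩
      exact ⟨k, by rw [hg3, ← zpow_mul, hk]⟩
  have hPcard : Nat.card P = 7 := by
    rw [hPdef, Nat.card_zpowers, orderOf_pow, horder]; decide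
  have hPN : P ≤ N := by
    rw [hPdef, Subgroup.zpowers_le]
    exact N.pow_mem hgN 3
  have hPconj : ∀ p ∈ P, ∀ b : G, b * p * b⁻¹ ∈ P := by
    intro p hp b
    obtain ⟨k, hk⟩ := (hPmem p).mp hp
    obtain ⟨m, hm⟩ : ∃ m : ℤ, g ^ m = b * g * b⁻¹ := hgen _ (hNnorm.conj_mem g hgN b)
    apply (hPmem _).mpr
    refine ⟨m * k, ?_⟩
    have h1 := map_zpow (MulAut.conj b) g (3 * k)
    simp only [MulAut.conj_apply] at h1
    rw [← hk, h1, ← hm, ← zpow_mul]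
    congr 1
    ring
  have hPfix : ∀ y ∉ C, ∀ p ∈ P, y⁻¹ * p * y = p → p = 1 := by
    intro y hy p hp heq
    obtain ⟨w, hw, hw3, hw1⟩ := hexp y hy
    obtain ⟨k, hk⟩ := (hPmem p).mp hp
    have h1 : y⁻¹ * g ^ (3 * k) * y = g ^ (w * (3 * k)) := hconj y w hw (3 * k)
    rw [hk, heq, ← hk] at h1
    have h2 := (hzm _ _).mp h1.symm
    push_cast at h2
    have key : ∀ v t : ZMod 21, v ^ 3 = 1 → v ≠ 1 → v * (3 * t) = 3 * t → 3 * t = 0 := by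
      decide
    have h3 : (3 * (k : ZMod 21)) = 0 := key _ _ hw3 hw1 h2
    rw [← hk]
    have : g ^ (3 * k) = g ^ (0 : ℤ) := by
      rw [hzm]
      push_cast
      simpa using h3
    rw [this, zpow_zero]
  have hCP : ∀ c ∈ C, ∀ p ∈ P, p * c = c * p := fun c hc p hp => hcent c hc p (hPN hp)
  have hmain : ∀ y, y ∉ C →
      (Nat.card (MulAction.orbit (ConjAct G) y) = 7 ∨
        Nat.card (MulAction.orbit (ConjAct G) y) = 21) ∧
      (Nat.card (MulAction.orbit (ConjAct G) y) = 7 ↔ ∀ c ∈ C, ⁅y⁻¹, c⁆ ∈ P) := by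
    intro y hy
    obtain ⟨w, hw, hw3, hw1⟩ := hexp y hy
    have hmul : ∀ a b : G, (∃ c ∈ C, ⁅y⁻¹, c⁆ = a) → (∃ c ∈ C, ⁅y⁻¹, c⁆ = b) →
        (∃ c ∈ C, ⁅y⁻¹, c⁆ = a * b) := by
      rintro a b ⟨c, hc, rfl⟩ ⟨d, hd, rfl⟩
      refine ⟨c * d, mul_mem hc hd, ?_⟩
      have hcen : c * ⁅y⁻¹, d⁆ * c⁻¹ = ⁅y⁻¹, d⁆ := hcentconj c hc _ (hcomN _ _)
      calc ⁅y⁻¹, c * d⁆ = ⁅y⁻¹, c⁆ * (c * ⁅y⁻¹, d⁆ * c⁻¹) := by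
            simp only [commutatorElement_def]; group
        _ = ⁅y⁻¹, c⁆ * ⁅y⁻¹, d⁆ := by rw [hcen]
    have hinv : ∀ a : G, (∃ c ∈ C, ⁅y⁻¹, c⁆ = a) → (∃ c ∈ C, ⁅y⁻¹, c⁆ = a⁻¹) := by
      rintro a ⟨c, hc, rfl⟩
      refine ⟨c⁻¹, inv_mem hc, ?_⟩
      have hcen : c⁻¹ * ⁅y⁻¹, c⁆⁻¹ * c = ⁅y⁻¹, c⁆⁻¹ := by
        have := hcentconj c⁻¹ (inv_mem hc) _ (N.inv_mem (hcomN y⁻¹ c))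
        simpa using this
      calc ⁅y⁻¹, c⁻¹⁆ = c⁻¹ * ⁅y⁻¹, c⁆⁻¹ * c := by
            simp only [commutatorElement_def]; group
        _ = ⁅y⁻¹, c⁆⁻¹ := hcen
    let R : Subgroup G :=
      { carrier := {h | ∃ c ∈ C, ⁅y⁻¹, c⁆ = h}
        one_mem' := ⟨1, one_mem C, by simp⟩
        mul_mem' := fun ha hb => hmul _ _ ha hb
        inv_mem' := fun ha => hinv _ ha }
    have hRmem : ∀ h : G, h ∈ R ↔ ∃ c ∈ C, ⁅y⁻¹, c⁆ = h := fun h => Iff.rfl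
    have horb : (MulAction.orbit (ConjAct G) y : Set G) = (fun h => y * h) '' (R : Set G) := by
      ext z
      constructor
      · intro hz
        obtain ⟨a, ha⟩ := MulAction.mem_orbit_iff.mp hz
        rw [ConjAct.smul_def] at ha
        obtain ⟨c, hc, k, hck⟩ := hdec y hy (ConjAct.ofConjAct a)
        refine ⟨⁅y⁻¹, c⁆, (hRmem _).mpr ⟨c, hc, rfl⟩, ?_⟩
        show y * ⁅y⁻¹, c⁆ = z
        rw [← ha, hck]
        simp only [commutatorElement_def]
        group
      · rintro ⟨h, hh, rfl⟩
        obtain ⟨c, hc, hch⟩ := (hRmem h).mp hh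
        apply MulAction.mem_orbit_iff.mpr
        refine ⟨ConjAct.toConjAct c, ?_⟩
        rw [ConjAct.smul_def, ConjAct.ofConjAct_toConjAct]
        show c * y * c⁻¹ = y * h
        rw [← hch]
        simp only [commutatorElement_def]
        group
    have hcardeq : Nat.card (MulAction.orbit (ConjAct G) y) = Nat.card R := by
      rw [Nat.card_coe_set_eq, horb,
        Set.ncard_image_of_injective _ (mul_right_injective y),
        ← Nat.card_coe_set_eq, SetLike.coe_sort_coe]
    have hRN : R ≤ N := by
      intro h hh
      obtain ⟨c, hc, hch⟩ := (hRmem h).mp hh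
      exact hch ▸ hcomN y⁻¹ c
    have hPR : P ≤ R := by
      rw [hPdef, Subgroup.zpowers_le]
      have hkey : ∀ v : ZMod 21, v ^ 3 = 1 → v ≠ 1 → ∃ t : ZMod 21, (v - 1) * t = 3 := by
        decide
      obtain ⟨t, ht⟩ := hkey _ hw3 hw1
      refine (hRmem _).mpr ⟨g ^ (t.val : ℤ), hNC (hgpow _), ?_⟩
      have h1 : y⁻¹ * g ^ (t.val : ℤ) * y = g ^ (w * t.val) := hconj y w hw _
      have h2 : ⁅y⁻¹, g ^ (t.val : ℤ)⁆ = g ^ (w * t.val) * g ^ (-(t.val : ℤ)) := by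
        rw [← h1]; simp only [commutatorElement_def]; group
      rw [h2, ← zpow_add, hg3, hzm]
      push_cast
      rw [ZMod.natCast_val, ZMod.cast_id]
      linear_combination ht
    have h7 : (7:ℕ) ∣ Nat.card R := hPcard ▸ Subgroup.card_dvd_of_le hPR
    have h21 : Nat.card R ∣ 21 := hcard ▸ Subgroup.card_dvd_of_le hRN
    have hdich : Nat.card R = 7 ∨ Nat.card R = 21 := by
      have hd : ∀ d ∈ Nat.divisors 21, 7 ∣ d → d = 7 ∨ d = 21 := by decide
      exact hd _ (Nat.mem_divisors.mpr ⟨h21, by norm_num⟩) h7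
    refine ⟨by rw [hcardeq]; exact hdich, ?_⟩
    rw [hcardeq]
    constructor
    · intro h7eq c hc
      have hPReq : P = R := Subgroup.eq_of_le_of_card_ge hPR (by rw [h7eq, hPcard])
      rw [hPReq]
      exact (hRmem _).mpr ⟨c, hc, rfl⟩
    · intro hsub
      have hRP : R ≤ P := by
        intro h hh
        obtain ⟨c, hc, hch⟩ := (hRmem h).mp hh
        exact hch ▸ hsub c hc
      rw [le_antisymm hRP hPR, hPcard]
  have hflipmem : ∀ a c : G, ⁅a⁻¹, c⁆ ∈ P → ⁅a, c⁆ ∈ P := by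
    intro a c h
    have hid : ⁅a, c⁆ = a * ⁅a⁻¹, c⁆⁻¹ * a⁻¹ := by
      simp only [commutatorElement_def]; group
    rw [hid]
    exact hPconj _ (P.inv_mem h) a
  have hHW : ∀ a b c : G,
      (b⁻¹ * ⁅⁅b, a⁻¹⁆, c⁻¹⁆ * b) * (c⁻¹ * ⁅⁅c, b⁻¹⁆, a⁻¹⁆ * c) *
        (a⁻¹ * ⁅⁅a, c⁻¹⁆, b⁻¹⁆ * a) = 1 := by
    intro a b c
    simp only [commutatorElement_def]
    group
  have hiden2 : ∀ c d : G, ⁅c⁻¹, d⁆ = c⁻¹ * ⁅c, d⁆⁻¹ * c := by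
    intro c d; simp only [commutatorElement_def]; group
  have hKZ : ∀ x₀, x₀ ∉ C → (∀ c ∈ C, ⁅x₀⁻¹, c⁆ ∈ P) →
      ∀ c ∈ C, (∀ d ∈ C, ⁅c, d⁆ ∈ P) → ∀ d ∈ C, c * d = d * c := by
    intro x₀ hx₀ hW c hc hcK d hd
    have h1 : ⁅⁅c, x₀⁻¹⁆, d⁻¹⁆ = 1 := by
      apply commutatorElement_eq_one_iff_mul_comm.mpr
      have hp : ⁅c, x₀⁻¹⁆ ∈ P := by
        rw [← commutatorElement_inv]
        exact P.inv_mem (hW c hc)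
      exact hCP d⁻¹ (inv_mem hd) _ hp
    have h3 : ⁅⁅x₀, d⁻¹⁆, c⁻¹⁆ = 1 := by
      apply commutatorElement_eq_one_iff_mul_comm.mpr
      exact hCP c⁻¹ (inv_mem hc) _ (hflipmem x₀ d⁻¹ (hW d⁻¹ (inv_mem hd)))
    have h2 : ⁅⁅d, c⁻¹⁆, x₀⁻¹⁆ = 1 := by
      have hid := hHW x₀ c d
      rw [h1, h3] at hid
      have h4 : d⁻¹ * ⁅⁅d, c⁻¹⁆, x₀⁻¹⁆ * d = 1 := by
        calc d⁻¹ * ⁅⁅d, c⁻¹⁆, x₀⁻¹⁆ * d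
            = (c⁻¹ * 1 * c) * (d⁻¹ * ⁅⁅d, c⁻¹⁆, x₀⁻¹⁆ * d) * (x₀⁻¹ * 1 * x₀) := by group
          _ = 1 := hid
      calc ⁅⁅d, c⁻¹⁆, x₀⁻¹⁆ = d * (d⁻¹ * ⁅⁅d, c⁻¹⁆, x₀⁻¹⁆ * d) * d⁻¹ := by group
        _ = 1 := by rw [h4]; group
    have hq : ⁅d, c⁻¹⁆ ∈ P := by
      rw [← commutatorElement_inv]
      apply P.inv_mem
      rw [hiden2 c d]
      have := hPconj _ (P.inv_mem (hcK d hd)) c⁻¹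
      simpa using this
    have hqx : x₀ * ⁅d, c⁻¹⁆ * x₀⁻¹ = ⁅d, c⁻¹⁆ := by
      have hcm := commutatorElement_eq_one_iff_mul_comm.mp h2
      calc x₀ * ⁅d, c⁻¹⁆ * x₀⁻¹ = x₀ * (⁅d, c⁻¹⁆ * x₀⁻¹) := by group
        _ = x₀ * (x₀⁻¹ * ⁅d, c⁻¹⁆) := by rw [hcm]
        _ = ⁅d, c⁻¹⁆ := by group
    have hx₀inv : x₀⁻¹ ∉ C := fun h => hx₀ (by simpa using inv_mem h)
    have hq1 : ⁅d, c⁻¹⁆ = 1 := by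
      apply hPfix x₀⁻¹ hx₀inv _ hq
      simpa using hqx
    have hcd : d * c⁻¹ = c⁻¹ * d := commutatorElement_eq_one_iff_mul_comm.mp hq1
    calc c * d = c * (d * c⁻¹) * c := by group
      _ = c * (c⁻¹ * d) * c := by rw [hcd]
      _ = d * c := by group
  have htrans : ∀ y, y ∉ C → (∀ d ∈ C, ⁅y⁻¹, d⁆ ∈ P) → ∀ c ∈ C,
      ((∀ d ∈ C, ⁅(y * c)⁻¹, d⁆ ∈ P) ↔ (∀ d ∈ C, ⁅c, d⁆ ∈ P)) := by
    intro y hy hW c hc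
    have hiden : ∀ d : G, ⁅(y * c)⁻¹, d⁆ = (c⁻¹ * ⁅y⁻¹, d⁆ * c) * ⁅c⁻¹, d⁆ := by
      intro d; simp only [commutatorElement_def]; group
    have hiden2 : ∀ d : G, ⁅c⁻¹, d⁆ = c⁻¹ * ⁅c, d⁆⁻¹ * c := by
      intro d; simp only [commutatorElement_def]; group
    constructor
    · intro hY d hd
      have h1 := hY d hd
      rw [hiden d] at h1
      have h2 : c⁻¹ * ⁅y⁻¹, d⁆ * c ∈ P := by
        have := hPconj _ (hW d hd) c⁻¹; simpa using this
      have h3 : ⁅c⁻¹, d⁆ ∈ P := by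
        have heq : ⁅c⁻¹, d⁆ =
            (c⁻¹ * ⁅y⁻¹, d⁆ * c)⁻¹ * ((c⁻¹ * ⁅y⁻¹, d⁆ * c) * ⁅c⁻¹, d⁆) := by group
        rw [heq]
        exact P.mul_mem (P.inv_mem h2) h1
      rw [hiden2 d] at h3
      have h4 := hPconj _ h3 c
      have h5 : c * (c⁻¹ * ⁅c, d⁆⁻¹ * c) * c⁻¹ = ⁅c, d⁆⁻¹ := by group
      rw [h5] at h4
      simpa using P.inv_mem h4
    · intro hK d hd
      rw [hiden d]
      apply P.mul_mem
      · have := hPconj _ (hW d hd) c⁻¹; simpa using this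
      · rw [hiden2 d]
        have := hPconj _ (P.inv_mem (hK d hd)) c⁻¹; simpa using this
  -- a fixed element outside C
  obtain ⟨x, hx⟩ : ∃ x : G, x ∉ C := by
    by_contra h
    push_neg at h
    have h1 : C.index = 1 := Subgroup.index_eq_one.mpr ((Subgroup.eq_top_iff' C).mpr h)
    rw [hidx] at h1
    exact absurd h1 (by norm_num)
  -- the center intersection
  have hinter : Nat.card ↥(N ⊓ Subgroup.center G) = 3 := by
    obtain ⟨w, hw, hw3, hw1⟩ := hexp x hx
    have h7c : g ^ (7:ℤ) ∈ Subgroup.center G := by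
      rw [Subgroup.mem_center_iff]
      intro a
      obtain ⟨c, hc, k, rfl⟩ := hdec x hx a
      have hxcomm : x⁻¹ * g ^ (7:ℤ) * x = g ^ (7:ℤ) := by
        rw [hconj x w hw 7, hzm]
        have hkey : ∀ v : ZMod 21, v ^ 3 = 1 → v ≠ 1 → v * 7 = 7 := by decide
        push_cast
        exact hkey _ hw3 hw1
      have hCom : Commute (g ^ (7:ℤ)) x := by
        show g ^ (7:ℤ) * x = x * g ^ (7:ℤ)
        calc g ^ (7:ℤ) * x = x * (x⁻¹ * g ^ (7:ℤ) * x) := by group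
          _ = x * g ^ (7:ℤ) := by rw [hxcomm]
      have hCom2 := (hCom.zpow_right k).eq
      have hCom3 : g ^ (7:ℤ) * c = c * g ^ (7:ℤ) := hcent c hc _ (hgpow 7)
      calc (c * x ^ k) * g ^ (7:ℤ) = c * (x ^ k * g ^ (7:ℤ)) := by group
        _ = c * (g ^ (7:ℤ) * x ^ k) := by rw [← hCom2]
        _ = (c * g ^ (7:ℤ)) * x ^ k := by group
        _ = (g ^ (7:ℤ) * c) * x ^ k := by rw [← hCom3]
        _ = g ^ (7:ℤ) * (c * x ^ k) := by group
    have heq : N ⊓ Subgroup.center G = Subgroup.zpowers (g ^ (7:ℤ)) := by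
      apply le_antisymm
      · intro h hmem
        rw [Subgroup.mem_inf] at hmem
        obtain ⟨hhN, hhZ⟩ := hmem
        obtain ⟨k, hk⟩ := hgen h hhN
        have hfix : x⁻¹ * h * x = h := by
          have hxz := (Subgroup.mem_center_iff.mp hhZ) x
          calc x⁻¹ * h * x = x⁻¹ * (h * x) := by group
            _ = x⁻¹ * (x * h) := by rw [← hxz]
            _ = h := by group
        rw [← hk] at hfix
        rw [hconj x w hw k] at hfix
        have hzk := (hzm _ _).mp hfix
        push_cast at hzk
        have hkey : ∀ v t : ZMod 21, v ^ 3 = 1 → v ≠ 1 → v * t = t →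
            ∃ m : ZMod 21, 7 * m = t := by decide
        obtain ⟨m, hm⟩ := hkey _ _ hw3 hw1 hzk
        rw [Subgroup.mem_zpowers_iff]
        refine ⟨(m.val : ℤ), ?_⟩
        rw [← zpow_mul, ← hk, hzm]
        push_cast
        rw [ZMod.natCast_val, ZMod.cast_id]
        exact hm
      · rw [Subgroup.zpowers_le, Subgroup.mem_inf]
        exact ⟨hgpow 7, h7c⟩
    rw [heq, Nat.card_zpowers]
    rw [show (g ^ (7:ℤ)) = g ^ (7:ℕ) by rw [← zpow_natCast g 7]; norm_num]
    rw [orderOf_pow, horder]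
    decide
  refine ⟨hidx, hinter, ?_⟩
  by_cases hexist : ∃ x₀, x₀ ∉ C ∧ ∀ c ∈ C, ⁅x₀⁻¹, c⁆ ∈ P
  · obtain ⟨x₀, hx₀, hWx₀⟩ := hexist
    refine Or.inr ⟨?_, ?_⟩
    · -- case (b) holds
      refine ⟨{y | y ∉ C ∧ ∀ d ∈ C, ⁅y⁻¹, d⁆ ∈ P}, fun y hy => hy.1, ?_, ?_, ?_⟩
      · -- cardinality
        have hWinv : ∀ y : G, (∀ c ∈ C, ⁅y⁻¹, c⁆ ∈ P) → ∀ c ∈ C, ⁅(y⁻¹)⁻¹, c⁆ ∈ P := by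
          intro y hW c hc
          rw [inv_inv]
          exact hflipmem y c (hW c hc)
        set Zs : Set G := Subtype.val '' ((Subgroup.center ↥C : Subgroup ↥C) : Set ↥C)
          with hZsdef
        have hZmem : ∀ z : G, z ∈ Zs ↔ z ∈ C ∧ ∀ d ∈ C, z * d = d * z := by
          intro z
          constructor
          · rintro ⟨⟨z', hz'⟩, hzc, rfl⟩
            refine ⟨hz', fun d hd => ?_⟩
            have h1 := Subgroup.mem_center_iff.mp hzc ⟨d, hd⟩
            have h2 := congrArg Subtype.val h1
            simpa using h2.symm
          · rintro ⟨hzC, hcomm⟩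
            refine ⟨⟨z, hzC⟩, ?_, rfl⟩
            show (⟨z, hzC⟩ : ↥C) ∈ Subgroup.center ↥C
            rw [Subgroup.mem_center_iff]
            rintro ⟨d, hd⟩
            apply Subtype.ext
            simpa using (hcomm d hd).symm
        have hx₀3 : (x₀ : G) ^ (3:ℤ) ∈ C := by
          have h1 := hq3 x₀
          have h0 : ((x₀ ^ (3:ℕ) : G) : G ⧸ C) = 1 := by
            rw [QuotientGroup.mk_pow]; exact h1
          have h2 := (QuotientGroup.eq_one_iff _).mp h0
          rw [show (x₀:G) ^ (3:ℤ) = x₀ ^ (3:ℕ) by rw [← zpow_natCast x₀ 3]; norm_num]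
          exact h2
        have hmod : ∀ k : ℤ, (3:ℤ) ∣ k → x₀ ^ k ∈ C := by
          rintro k ⟨m, rfl⟩
          rw [zpow_mul]
          exact C.zpow_mem hx₀3 m
        have hcoset : ∀ y : G, y ∉ C → (x₀⁻¹ * y ∈ C) ∨ (x₀ * y ∈ C) := by
          intro y hy
          obtain ⟨c, hc, k, rfl⟩ := hdec x₀ hx₀ y
          have h3 : k % 3 = 0 ∨ k % 3 = 1 ∨ k % 3 = 2 := by omega
          rcases h3 with h0 | h1 | h2
          · exact absurd (mul_mem hc (hmod k (Int.dvd_of_emod_eq_zero h0))) hy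
          · left
            have he : x₀⁻¹ * (c * x₀ ^ k) = (x₀⁻¹ * c * x₀) * x₀ ^ (k - 1) := by group
            rw [he]
            refine mul_mem ?_ (hmod _ (by omega))
            simpa using hCnorm.conj_mem c hc x₀⁻¹
          · right
            have he : x₀ * (c * x₀ ^ k) = (x₀ * c * x₀⁻¹) * x₀ ^ (k + 1) := by group
            rw [he]
            exact mul_mem (hCnorm.conj_mem c hc x₀) (hmod _ (by omega))
        have hleft : ∀ y, y ∉ C → (∀ d ∈ C, ⁅y⁻¹, d⁆ ∈ P) → x₀⁻¹ * y ∈ C →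
            ∃ z ∈ Zs, x₀ * z = y := by
          intro y hy hWy hc
          refine ⟨x₀⁻¹ * y, ?_, by group⟩
          apply (hZmem _).mpr
          refine ⟨hc, ?_⟩
          have hWyc : ∀ d ∈ C, ⁅(x₀ * (x₀⁻¹ * y))⁻¹, d⁆ ∈ P := by
            intro d hd
            have he : x₀ * (x₀⁻¹ * y) = y := by group
            rw [he]
            exact hWy d hd
          have hK := (htrans x₀ hx₀ hWx₀ _ hc).mp hWyc
          exact hKZ x₀ hx₀ hWx₀ _ hc hK
        have hup : ∀ z ∈ Zs, (x₀ * z) ∉ C ∧ ∀ d ∈ C, ⁅(x₀ * z)⁻¹, d⁆ ∈ P := by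
          intro z hz
          obtain ⟨hzC, hzcomm⟩ := (hZmem z).mp hz
          constructor
          · intro h
            apply hx₀
            have he : (x₀ : G) = (x₀ * z) * z⁻¹ := by group
            rw [he]
            exact mul_mem h (inv_mem hzC)
          · apply (htrans x₀ hx₀ hWx₀ z hzC).mpr
            intro d hd
            have h1 : ⁅z, d⁆ = 1 := commutatorElement_eq_one_iff_mul_comm.mpr (hzcomm d hd)
            rw [h1]
            exact one_mem P
        have hYeq : {y : G | y ∉ C ∧ ∀ d ∈ C, ⁅y⁻¹, d⁆ ∈ P} =
            (fun z => x₀ * z) '' Zs ∪ (fun z => (x₀ * z)⁻¹) '' Zs := by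
          ext y
          constructor
          · rintro ⟨hyC, hWy⟩
            rcases hcoset y hyC with h1 | h2
            · exact Or.inl (hleft y hyC hWy h1)
            · right
              have hyinvC : y⁻¹ ∉ C := fun h => hyC (by simpa using inv_mem h)
              have hWyinv : ∀ d ∈ C, ⁅(y⁻¹)⁻¹, d⁆ ∈ P := hWinv y hWy
              have hcinv : x₀⁻¹ * y⁻¹ ∈ C := by
                have h4 : y⁻¹ * x₀⁻¹ ∈ C := by
                  have he : y⁻¹ * x₀⁻¹ = (x₀ * y)⁻¹ := by group
                  rw [he]
                  exact inv_mem h2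
                have he : x₀⁻¹ * y⁻¹ = x₀⁻¹ * (y⁻¹ * x₀⁻¹) * x₀ := by group
                rw [he]
                simpa using hCnorm.conj_mem _ h4 x₀⁻¹
              obtain ⟨z, hz, hze⟩ := hleft y⁻¹ hyinvC hWyinv hcinv
              refine ⟨z, hz, ?_⟩
              show (x₀ * z)⁻¹ = y
              rw [hze]
              group
          · rintro (⟨z, hz, rfl⟩ | ⟨z, hz, rfl⟩)
            · exact hup z hz
            · obtain ⟨hnot, hWz⟩ := hup z hz
              refine ⟨fun h => hnot (by simpa using inv_mem h), ?_⟩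
              exact hWinv (x₀ * z) hWz
        rw [Nat.card_coe_set_eq, hYeq]
        have hdisj : Disjoint ((fun z => x₀ * z) '' Zs) ((fun z => (x₀ * z)⁻¹) '' Zs) := by
          rw [Set.disjoint_left]
          rintro a ⟨z1, hz1, he1⟩ ⟨z2, hz2, he2⟩
          obtain ⟨hz1C, -⟩ := (hZmem z1).mp hz1
          obtain ⟨hz2C, -⟩ := (hZmem z2).mp hz2
          apply hsq x₀ hx₀
          have he1' : x₀ * z1 = a := he1
          have he2' : (x₀ * z2)⁻¹ = a := he2
          have heq12 : x₀ * z1 = (x₀ * z2)⁻¹ := by rw [he1', ← he2']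
          have h5 : x₀ * z1 * x₀ = z2⁻¹ := by
            calc x₀ * z1 * x₀ = (x₀ * z1) * x₀ := by group
              _ = (x₀ * z2)⁻¹ * x₀ := by rw [heq12]
              _ = z2⁻¹ := by group
          have h6 : x₀ * z1 * x₀ ∈ C := h5 ▸ inv_mem hz2C
          have h7 : x₀ * x₀ = (x₀ * z1 * x₀) * (x₀⁻¹ * z1⁻¹ * x₀) := by group
          rw [h7]
          refine mul_mem h6 ?_
          simpa using hCnorm.conj_mem _ (inv_mem hz1C) x₀⁻¹
        rw [Set.ncard_union_eq hdisj (Set.toFinite _) (Set.toFinite _)]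
        have hinj1 : Function.Injective (fun z : G => x₀ * z) := mul_right_injective x₀
        have hinj2 : Function.Injective (fun z : G => (x₀ * z)⁻¹) :=
          fun a b h => hinj1 (inv_injective h)
        rw [Set.ncard_image_of_injective _ hinj1, Set.ncard_image_of_injective _ hinj2]
        have hZcard : Zs.ncard = Nat.card ↥(Subgroup.center ↥C) := by
          rw [hZsdef, Set.ncard_image_of_injective _ Subtype.val_injective,
            ← Nat.card_coe_set_eq, SetLike.coe_sort_coe]
        rw [hZcard]
        omega
      · intro y hy
        exact ((hmain y hy.1).2).mpr hy.2
      · intro y hyC hyX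
        rcases (hmain y hyC).1 with h7 | h21
        · exact absurd (⟨hyC, ((hmain y hyC).2).mp h7⟩ :
            y ∈ {y | y ∉ C ∧ ∀ d ∈ C, ⁅y⁻¹, d⁆ ∈ P}) hyX
        · exact h21
    · -- (a) fails
      intro hA
      have h7 := ((hmain x₀ hx₀).2).mpr hWx₀
      have h21 := hA x₀ hx₀
      rw [h21] at h7
      exact absurd h7 (by norm_num)
  · have hexist' : ∀ y, y ∉ C → ¬ (∀ c ∈ C, ⁅y⁻¹, c⁆ ∈ P) := by
      intro y hy hcon
      exact hexist ⟨y, hy, hcon⟩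
    refine Or.inl ⟨?_, ?_⟩
    · intro y hy
      rcases (hmain y hy).1 with h7 | h21
      · exact absurd (((hmain y hy).2).mp h7) (hexist' y hy)
      · exact h21
    · rintro ⟨X, hXsub, hXcard, hX7, hX21⟩
      have hpos : 0 < Nat.card (Subgroup.center ↥C) := Nat.card_pos
      have hne : (Nat.card X) ≠ 0 := by omega
      have : Nonempty X := Nat.card_ne_zero.mp hne |>.1
      obtain ⟨⟨y, hyX⟩⟩ := this
      have hyC : y ∉ C := hXsub hyX
      exact hexist' y hyC (((hmain y hyC).2).mp (hX7 y hyX))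
end

section
/- Let G be a finite group with |G| ≡ 3 (mod 6), whose commutator subgroup G' is isomorphic to C₅ × C₅ and satisfies G' ∩ Z(G) = {1}. Then: (a) every non-identity element x of G' has conjugacy class of size exactly 3 in G; and (b) |G : C_G(G')| = 3. -/
private lemma odd_of_dvd' {m n : ℕ} (h : m ∣ n) (hn : Odd n) : Odd m := by
  rcases Nat.even_or_odd m with he | ho
  · exact absurd (he.two_dvd.trans h |> (even_iff_two_dvd).mpr) (Nat.not_even_iff_odd.mpr hn)
  · exact ho

private lemma orderOf_eq_five' {G : Type*} [Group G] {y : G} (h5 : y ^ 5 = 1) (h1 : y ≠ 1) :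
    orderOf y = 5 := by
  rcases (by norm_num : Nat.Prime 5).eq_one_or_self_of_dvd (orderOf y)
    (orderOf_dvd_of_pow_eq_one h5) with h | h
  · exact absurd (orderOf_eq_one_iff.mp h) h1
  · exact h

private lemma conj_eq_self_of_mem_zpowers {G : Type*} [Group G] [Finite G]
    (hodd : Odd (Nat.card G)) {x : G} (hx5 : x ^ 5 = 1) (g : G)
    (h : g * x * g⁻¹ ∈ Subgroup.zpowers x) : g * x * g⁻¹ = x := by
  rcases eq_or_ne x 1 with rfl | hx1
  · simp
  haveI : Fact (Nat.Prime 5) := ⟨by norm_num⟩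
  have hord : orderOf x = 5 := by
    rcases (Nat.prime_def_lt.mp (by norm_num : Nat.Prime 5)).2 |> fun _ => (by norm_num : Nat.Prime 5).eq_one_or_self_of_dvd (orderOf x) (orderOf_dvd_of_pow_eq_one hx5) with h1 | h1
    · exact absurd (orderOf_eq_one_iff.mp h1) hx1
    · exact h1
  obtain ⟨k, hk⟩ := Subgroup.mem_zpowers_iff.mp h
  set m := orderOf g with hm
  have hmodd : Odd m := odd_of_dvd' (orderOf_dvd_natCard g) hodd
  have hm0 : m ≠ 0 := (orderOf_pos g).ne'
  have key : ∀ n : ℕ, g ^ n * x * (g ^ n)⁻¹ = x ^ (k ^ n) := by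
    intro n
    induction n with
    | zero => simp
    | succ n ih =>
      have h1 : g ^ (n + 1) * x * (g ^ (n + 1))⁻¹ = g * (g ^ n * x * (g ^ n)⁻¹) * g⁻¹ := by
        group
      have h2 : g * x ^ (k ^ n) * g⁻¹ = (g * x * g⁻¹) ^ (k ^ n) := by
        simpa [MulAut.conj_apply] using (map_zpow (MulAut.conj g) x (k ^ n)).symm
      rw [h1, ih, h2, ← hk, ← zpow_mul]
      rw [show k * k ^ n = k ^ (n + 1) by ring]
  have hxkm : x ^ (k ^ m - 1) = 1 := by
    have := key m
    rw [pow_orderOf_eq_one g] at this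
    simp only [one_mul, inv_one, mul_one] at this
    rw [zpow_sub, ← this, zpow_one, mul_inv_cancel]
  have hdvd : ((5 : ℕ) : ℤ) ∣ k ^ m - 1 := by
    rw [show ((5:ℕ):ℤ) = (orderOf x : ℤ) by rw [hord]]
    exact orderOf_dvd_iff_zpow_eq_one.mpr hxkm
  have hu : ((k : ZMod 5)) ^ m = 1 := by
    have : ((k ^ m - 1 : ℤ) : ZMod 5) = 0 := by
      exact_mod_cast (ZMod.intCast_zmod_eq_zero_iff_dvd _ 5).mpr (by exact_mod_cast hdvd)
    push_cast at this
    linear_combination this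
  have hu0 : (k : ZMod 5) ≠ 0 := by
    intro h0
    rw [h0, zero_pow hm0] at hu
    exact zero_ne_one hu
  have hu4 : ((k : ZMod 5)) ^ 4 = 1 := by
    have := ZMod.pow_card_sub_one_eq_one hu0
    norm_num at this
    exact this
  have hou : orderOf ((k : ZMod 5)) = 1 := by
    have h1 : orderOf ((k : ZMod 5)) ∣ m := orderOf_dvd_of_pow_eq_one hu
    have h2 : orderOf ((k : ZMod 5)) ∣ 4 := orderOf_dvd_of_pow_eq_one hu4
    have h3 : Odd (orderOf ((k : ZMod 5))) := odd_of_dvd' h1 hmodd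
    have h4 := Nat.le_of_dvd (by norm_num) h2
    interval_cases h : (orderOf ((k : ZMod 5))) <;> revert h2 h3 <;> decide
  have hk1 : (k : ZMod 5) = 1 := orderOf_eq_one_iff.mp hou
  have : ((5:ℕ) : ℤ) ∣ k - 1 := by
    have : ((k - 1 : ℤ) : ZMod 5) = 0 := by push_cast [hk1]; ring
    exact_mod_cast (ZMod.intCast_zmod_eq_zero_iff_dvd _ 5).mp (by exact_mod_cast this)
  have hxk1 : x ^ (k - 1) = 1 := by
    apply orderOf_dvd_iff_zpow_eq_one.mp
    rw [hord]; exact_mod_cast this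
  rw [← hk]
  calc x ^ k = x ^ (k - 1) * x ^ (1:ℤ) := by rw [← zpow_add]; ring_nf
  _ = x := by rw [hxk1, one_mul, zpow_one]

private lemma orbit_conj_eq {G : Type*} [Group G] [Finite G] (hodd : Odd (Nat.card G)) {x y z : G}
    (hx5 : x ^ 5 = 1) (hy : y ∈ MulAction.orbit (ConjAct G) x)
    (hz : z ∈ MulAction.orbit (ConjAct G) x)
    (h : z ∈ Subgroup.zpowers y) : z = y := by
  obtain ⟨a, rfl⟩ := hy
  obtain ⟨b, rfl⟩ := hz
  simp only [ConjAct.smul_def] at h ⊢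
  set A := ConjAct.ofConjAct a with hA
  set B := ConjAct.ofConjAct b with hB
  have hy5 : (A * x * A⁻¹) ^ 5 = 1 := by rw [conj_pow, hx5, mul_one, mul_inv_cancel]
  have key : (B * A⁻¹) * (A * x * A⁻¹) * (B * A⁻¹)⁻¹ = B * x * B⁻¹ := by group
  rw [← key] at h ⊢
  exact conj_eq_self_of_mem_zpowers hodd hy5 _ h

private lemma pow_pow_cube {G : Type*} [Group G] {z : G} (hz : orderOf z = 5) {j : ℕ}
    (hj : j < 4) : (z ^ (j + 1)) ^ ((j + 1) ^ 3) = z := by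
  rw [← pow_mul]
  have h1 : z ^ ((j + 1) * (j + 1) ^ 3) = z ^ (1 : ℕ) := by
    rw [pow_eq_pow_iff_modEq, hz]
    interval_cases j <;> decide
  simpa using h1

private lemma orbit_card_eq_three {G : Type*} [Group G] [Finite G]
    (hodd : Odd (Nat.card G))
    (hcard : Nat.card (commutator G) = 25)
    (hexp : ∀ q ∈ commutator G, q ^ 5 = 1)
    (hGZ : commutator G ⊓ Subgroup.center G = ⊥)
    {x : G} (hxQ : x ∈ commutator G) (hx1 : x ≠ 1) :
    Nat.card (MulAction.orbit (ConjAct G) x) = 3 := by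
  have hnormal : (commutator G).Normal := inferInstance
  set O := MulAction.orbit (ConjAct G) x with hO
  -- all orbit elements are nontrivial elements of the commutator subgroup
  have hO_sub : ∀ y ∈ O, y ∈ commutator G ∧ y ≠ 1 := by
    rintro _ ⟨a, rfl⟩
    simp only [ConjAct.smul_def]
    refine ⟨hnormal.conj_mem x hxQ _, fun h => ?_⟩
    apply hx1
    have h2 : x = (ConjAct.ofConjAct a)⁻¹ * (ConjAct.ofConjAct a * x * (ConjAct.ofConjAct a)⁻¹) *
        ConjAct.ofConjAct a := by group
    rw [h] at h2
    simpa using h2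
  have hO_smul : ∀ (c : ConjAct G), ∀ y ∈ O, c • y ∈ O := by
    rintro c _ ⟨a, rfl⟩
    rw [← mul_smul]
    exact MulAction.mem_orbit x (c * a)
  have hforder : ∀ y ∈ O, orderOf y = 5 := fun y hy =>
    orderOf_eq_five' (hexp y (hO_sub y hy).1) (hO_sub y hy).2
  -- the "blow-up" map
  set f : ↥O × Fin 4 → G := fun p => (p.1 : G) ^ ((p.2 : ℕ) + 1) with hf
  have hinj : Function.Injective f := by
    rintro ⟨⟨y, hy⟩, i⟩ ⟨⟨z, hz⟩, j⟩ hfeq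
    simp only [hf] at hfeq
    have hzy : z ∈ Subgroup.zpowers y := by
      have h1 : z ∈ Subgroup.zpowers (z ^ ((j : ℕ) + 1)) :=
        Subgroup.mem_zpowers_iff.mpr ⟨(((((j : ℕ) + 1) ^ 3 : ℕ)) : ℤ), by
          rw [zpow_natCast]; exact pow_pow_cube (hforder z hz) j.isLt⟩
      rw [← hfeq] at h1
      exact Subgroup.zpowers_le.mpr
        (Subgroup.mem_zpowers_iff.mpr ⟨((((i : ℕ) + 1 : ℕ)) : ℤ), by rw [zpow_natCast]⟩) h1
    obtain rfl : z = y := orbit_conj_eq hodd (hexp x hxQ) hy hz hzy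
    have h2 : ((i : ℕ) + 1) % 5 = ((j : ℕ) + 1) % 5 := by
      have := (pow_eq_pow_iff_modEq.mp hfeq)
      rwa [hforder z hy] at this
    have : (i : ℕ) = (j : ℕ) := by omega
    simp [Prod.ext_iff, Subtype.ext_iff, Fin.ext_iff, this]
  -- cardinality of the blow-up set
  have hcardB : Nat.card (Set.range f) = Nat.card ↥O * 4 := by
    rw [Nat.card_range_of_injective hinj, Nat.card_prod]
    simp
  have hBT : Set.range f ⊆ (commutator G : Set G) \ {1} := by
    rintro _ ⟨⟨⟨y, hy⟩, i⟩, rfl⟩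
    refine ⟨?_, ?_⟩
    · exact Subgroup.pow_mem _ (hO_sub y hy).1 _
    · simp only [Set.mem_singleton_iff]
      intro h
      have := orderOf_dvd_of_pow_eq_one h
      rw [hforder y hy] at this
      have := Nat.le_of_dvd (by omega) this
      omega
  have hT : ((commutator G : Set G) \ {1}).ncard = 24 := by
    rw [Set.ncard_diff_singleton_of_mem (Subgroup.one_mem _)]
    have h25 : (commutator G : Set G).ncard = 25 := by
      rw [← Nat.card_coe_set_eq]
      simpa using hcard
    omega
  have h4le : Nat.card ↥O * 4 ≤ 24 := by
    rw [← hcardB, Nat.card_coe_set_eq, ← hT]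
    exact Set.ncard_le_ncard hBT (Set.toFinite _)
  have hodd_o : Odd (Nat.card ↥O) := by
    have h1 : (MulAction.stabilizer (ConjAct G) x).index = O.ncard :=
      MulAction.index_stabilizer _ _
    have h2 : Nat.card ↥O ∣ Nat.card G := by
      rw [Nat.card_coe_set_eq, ← h1]
      exact Subgroup.index_dvd_card _
    exact odd_of_dvd' h2 hodd
  have ho1 : Nat.card ↥O ≠ 1 := by
    intro h1
    rw [Nat.card_coe_set_eq, Set.ncard_eq_one] at h1
    obtain ⟨a, ha⟩ := h1
    have hxa : x = a := by
      have := MulAction.mem_orbit_self (M := ConjAct G) x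
      rw [← hO, ha] at this
      simpa using this
    have hc : x ∈ Subgroup.center G := by
      rw [Subgroup.mem_center_iff]
      intro g
      have h2 : ConjAct.toConjAct g • x ∈ O := MulAction.mem_orbit x _
      rw [ha, ← hxa] at h2
      simp only [Set.mem_singleton_iff, ConjAct.smul_def, ConjAct.ofConjAct_toConjAct] at h2
      calc g * x = (g * x * g⁻¹) * g := by group
      _ = x * g := by rw [h2]
    have : x ∈ (⊥ : Subgroup G) := hGZ ▸ (Subgroup.mem_inf.mpr ⟨hxQ, hc⟩)
    exact hx1 (Subgroup.mem_bot.mp this)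
  have ho35 : Nat.card ↥O = 3 ∨ Nat.card ↥O = 5 := by
    have := Nat.odd_iff.mp hodd_o
    omega
  rcases ho35 with h | h
  · exact h
  -- rule out orbit size 5
  exfalso
  have hBpow : ∀ v ∈ Set.range f, ∀ n : ℕ, v ^ n ≠ 1 → v ^ n ∈ Set.range f := by
    rintro _ ⟨⟨⟨y, hy⟩, i⟩, rfl⟩ n hn
    simp only [hf] at hn ⊢
    rw [← pow_mul] at hn ⊢
    set r := (((i : ℕ) + 1) * n) % 5 with hr
    have hyo := hforder y hy
    have hrw : y ^ (((i : ℕ) + 1) * n) = y ^ r := by rw [hr, ← hyo, pow_mod_orderOf]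
    have hr0 : r ≠ 0 := by
      intro h0
      rw [hrw, h0, pow_zero] at hn
      exact hn rfl
    have hr5 : r < 5 := Nat.mod_lt _ (by omega)
    refine ⟨⟨⟨y, hy⟩, ⟨r - 1, by omega⟩⟩, ?_⟩
    simp only [hf]
    rw [show r - 1 + 1 = r by omega, ← hrw]
  set W := (((commutator G : Set G) \ {1}) \ Set.range f) with hW
  have hWcard : W.ncard = 4 := by
    rw [hW, Set.ncard_diff hBT (Set.toFinite _), hT, ← Nat.card_coe_set_eq, hcardB, h]
  obtain ⟨w, hw⟩ : W.Nonempty := Set.nonempty_of_ncard_ne_zero (by rw [hWcard]; omega)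
  obtain ⟨⟨hwQ, hw1'⟩, hwB⟩ := hw
  have hw1 : w ≠ 1 := by simpa using hw1'
  have hworder : orderOf w = 5 := orderOf_eq_five' (hexp w hwQ) hw1
  have hWpow : ∀ i : Fin 4, w ^ ((i : ℕ) + 1) ∈ W := by
    intro i
    refine ⟨⟨Subgroup.pow_mem _ hwQ _, ?_⟩, ?_⟩
    · simp only [Set.mem_singleton_iff]
      intro hpow
      have := Nat.le_of_dvd (by omega) (hworder ▸ orderOf_dvd_of_pow_eq_one hpow)
      omega
    · intro hB
      apply hwB
      have hwpow : (w ^ ((i : ℕ) + 1)) ^ (((i : ℕ) + 1) ^ 3) = w :=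
        pow_pow_cube hworder i.isLt
      have := hBpow _ hB (((i : ℕ) + 1) ^ 3) (by rw [hwpow]; exact hw1)
      rwa [hwpow] at this
  set g : Fin 4 → G := fun i => w ^ ((i : ℕ) + 1) with hg
  have hginj : Function.Injective g := by
    intro i j hij
    simp only [hg] at hij
    have h2 := pow_eq_pow_iff_modEq.mp hij
    rw [hworder] at h2
    have : (i : ℕ) = (j : ℕ) := by
      have := h2
      unfold Nat.ModEq at this
      omega
    exact Fin.ext this
  have hPcard : (Set.range g).ncard = 4 := by
    rw [← Nat.card_coe_set_eq, Nat.card_range_of_injective hginj]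
    simp
  have hPW : Set.range g ⊆ W := by rintro _ ⟨i, rfl⟩; exact hWpow i
  have hPeq : Set.range g = W :=
    Set.eq_of_subset_of_ncard_le hPW (by omega) (Set.toFinite _)
  have hconjW : ∀ g' : G, g' * w * g'⁻¹ ∈ W := by
    intro g'
    refine ⟨⟨hnormal.conj_mem w hwQ _, ?_⟩, ?_⟩
    · simp only [Set.mem_singleton_iff]
      intro h0
      apply hw1
      have h2 : w = g'⁻¹ * (g' * w * g'⁻¹) * g' := by group
      rw [h0] at h2
      simpa using h2
    · intro hB
      apply hwB
      obtain ⟨⟨⟨y, hy⟩, i⟩, hfe⟩ := hB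
      simp only [hf] at hfe
      have hy' : (ConjAct.toConjAct g'⁻¹) • y ∈ O := hO_smul _ y hy
      rw [ConjAct.smul_def, ConjAct.ofConjAct_toConjAct] at hy'
      refine ⟨⟨⟨g'⁻¹ * y * g'⁻¹⁻¹, hy'⟩, i⟩, ?_⟩
      simp only [hf]
      rw [conj_pow, hfe]
      group
  have hcent : ∀ g' : G, g' * w * g'⁻¹ = w := by
    intro g'
    apply conj_eq_self_of_mem_zpowers hodd (hexp w hwQ)
    have h2 := hconjW g'
    rw [← hPeq] at h2
    obtain ⟨i, hi⟩ := h2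
    rw [← hi]
    exact Subgroup.mem_zpowers_iff.mpr ⟨((((i : ℕ) + 1 : ℕ)) : ℤ), by rw [zpow_natCast]⟩
  have hc : w ∈ Subgroup.center G := by
    rw [Subgroup.mem_center_iff]
    intro g'
    calc g' * w = (g' * w * g'⁻¹) * g' := by group
    _ = w * g' := by rw [hcent g']
  have : w ∈ (⊥ : Subgroup G) := hGZ ▸ (Subgroup.mem_inf.mpr ⟨hwQ, hc⟩)
  exact hw1 (Subgroup.mem_bot.mp this)

private lemma dvd_25 {d : ℕ} (hd : d ∣ 25) : d = 1 ∨ d = 5 ∨ d = 25 := by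
  have h1 : d ≤ 25 := Nat.le_of_dvd (by norm_num) hd
  revert hd
  interval_cases d <;> decide

/-- Let `G` be a finite group with `|G| ≡ 3 (mod 6)`, whose commutator
subgroup is isomorphic to `C₅ × C₅` and satisfies `G' ∩ Z(G) = {1}`. Then
(a) every non-identity element of `G'` has conjugacy class of size `3` in `G`, and
(b) `|G : C_G(G')| = 3`. -/
theorem commutator_elementary_abelian_card_25 (G : Type*) [Group G] [Finite G]
    (hmod : Nat.card G % 6 = 3)
    (hG' : Nonempty (↥(commutator G) ≃* (Multiplicative (ZMod 5) × Multiplicative (ZMod 5))))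
    (hGZ : commutator G ⊓ Subgroup.center G = ⊥) :
    (∀ x ∈ commutator G, x ≠ 1 → Nat.card (MulAction.orbit (ConjAct G) x) = 3) ∧
    (Subgroup.centralizer (commutator G : Set G)).index = 3 := by
  obtain ⟨e⟩ := hG'
  have hoddG : Odd (Nat.card G) := Nat.odd_iff.mpr (by omega)
  have hcard : Nat.card (commutator G) = 25 := by
    rw [Nat.card_congr e.toEquiv, Nat.card_prod, Nat.card_congr Multiplicative.toAdd,
      Nat.card_zmod]
  have hexp : ∀ q ∈ commutator G, q ^ 5 = 1 := by
    intro q hq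
    have h5 : ∀ m : Multiplicative (ZMod 5) × Multiplicative (ZMod 5), m ^ 5 = 1 := by decide
    have h1 : (⟨q, hq⟩ : commutator G) ^ 5 = 1 := by
      apply e.injective
      rw [map_pow, map_one, h5]
    simpa using congrArg Subtype.val h1
  have parta : ∀ x ∈ commutator G, x ≠ 1 → Nat.card (MulAction.orbit (ConjAct G) x) = 3 :=
    fun x hx h1 => orbit_card_eq_three hoddG hcard hexp hGZ hx h1
  refine ⟨parta, ?_⟩
  obtain ⟨x, hxQ, hx1⟩ : ∃ x ∈ commutator G, x ≠ 1 := by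
    by_contra h
    push_neg at h
    have hbot : commutator G = ⊥ := (Subgroup.eq_bot_iff_forall _).mpr h
    rw [hbot] at hcard
    simp at hcard
  have hoddC : Odd (Nat.card (ConjAct G)) := hoddG
  set O := MulAction.orbit (ConjAct G) x with hO
  have hO_smul : ∀ (c : ConjAct G), ∀ y ∈ O, c • y ∈ O := by
    rintro c _ ⟨a, rfl⟩
    rw [← mul_smul]
    exact MulAction.mem_orbit x (c * a)
  set K := Subgroup.centralizer ({x} : Set G) with hK
  have hKindex : K.index = 3 := by
    erw [hK, Subgroup.centralizer_eq_comap_stabilizer,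
      Subgroup.index_comap_of_surjective _ (MulEquiv.surjective _), MulAction.index_stabilizer,
      ← Nat.card_coe_set_eq]
    exact parta x hxQ hx1
  have hS : (O \ {x}).ncard = 2 := by
    rw [Set.ncard_diff_singleton_of_mem (MulAction.mem_orbit_self (M := ConjAct G) x)
      , ← Nat.card_coe_set_eq, parta x hxQ hx1]
  have hCK : Subgroup.centralizer ((commutator G : Subgroup G) : Set G) = K := by
    apply le_antisymm
    · exact Subgroup.centralizer_le (by simpa using hxQ)
    · intro g hgK
      have hgx : g * x * g⁻¹ = x := by
        have h1 := Subgroup.mem_centralizer_iff.mp hgK x rfl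
        rw [← h1]
        group
      set c := ConjAct.toConjAct g with hc
      have hstab : c ∈ MulAction.stabilizer (ConjAct G) x := by
        rw [MulAction.mem_stabilizer_iff, hc, ConjAct.smul_def, ConjAct.ofConjAct_toConjAct]
        exact hgx
      have hfix : ∀ y ∈ O, c • y = y := by
        intro y hy
        rcases eq_or_ne y x with rfl | hyx
        · exact hstab
        have hne : ∀ k : ℕ, (c ^ k) • y ≠ x := by
          intro k hk
          apply hyx
          have h2 : ((c ^ k)⁻¹ : ConjAct G) ∈ MulAction.stabilizer (ConjAct G) x :=
            (MulAction.stabilizer (ConjAct G) x).inv_mem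
              ((MulAction.stabilizer (ConjAct G) x).pow_mem hstab k)
          calc y = (c ^ k)⁻¹ • ((c ^ k) • y) := by rw [inv_smul_smul]
          _ = (c ^ k)⁻¹ • x := by rw [hk]
          _ = x := h2
        have hyS : ∀ k : ℕ, (c ^ k) • y ∈ O \ {x} := fun k =>
          ⟨hO_smul _ y hy, hne k⟩
        by_contra hcy
        rcases eq_or_ne ((c ^ 2) • y) y with h2 | h2
        · apply hcy
          obtain ⟨t, ht⟩ := odd_of_dvd' (orderOf_dvd_natCard c) hoddC
          have hc2 : ∀ n : ℕ, (c ^ 2) ^ n • y = y := by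
            intro n
            induction n with
            | zero => simp
            | succ n ih => rw [pow_succ, mul_smul, h2, ih]
          have h3 := hc2 (t + 1)
          rw [← pow_mul, show 2 * (t + 1) = (2 * t + 1) + 1 by ring, pow_succ, ← ht,
            pow_orderOf_eq_one, one_mul] at h3
          exact h3
        rcases eq_or_ne ((c ^ 1) • y) ((c ^ 2) • y) with h12 | h12
        · apply hcy
          rw [pow_one, show (2 : ℕ) = 1 + 1 by rfl, pow_succ, mul_smul, pow_one] at h12
          exact (MulAction.injective c h12).symm
        · exfalso
          have hsub : ({y, c • y, (c ^ 2) • y} : Set G) ⊆ O \ {x} := by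
            intro z hz
            rcases hz with rfl | rfl | rfl
            · simpa using hyS 0
            · simpa using hyS 1
            · exact hyS 2
          have hyc : y ≠ c • y := fun h => hcy h.symm
          have hyc2 : y ≠ (c ^ 2) • y := fun h => h2 h.symm
          have hcc2 : c • y ≠ (c ^ 2) • y := by simpa using h12
          have h3 : ({y, c • y, (c ^ 2) • y} : Set G).ncard = 3 := by
            rw [Set.ncard_insert_of_notMem (by simp [hyc, hyc2]) (Set.toFinite _),
              Set.ncard_pair hcc2]
          have := Set.ncard_le_ncard hsub (Set.toFinite _)
          omega
      -- g centralizes the whole commutator subgroup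
      set D := commutator G ⊓ Subgroup.centralizer ({g} : Set G) with hD
      have hOD : ∀ y ∈ O, y ∈ D := by
        intro y hy
        refine Subgroup.mem_inf.mpr ⟨?_, ?_⟩
        · obtain ⟨a, rfl⟩ := hy
          have hn : (commutator G).Normal := inferInstance
          simp only [ConjAct.smul_def]
          exact hn.conj_mem x hxQ _
        · rw [Subgroup.mem_centralizer_iff]
          intro h' hh'
          rw [Set.mem_singleton_iff] at hh'
          rw [hh']
          have h1 := hfix y hy
          rw [hc, ConjAct.smul_def, ConjAct.ofConjAct_toConjAct] at h1
          calc g * y = (g * y * g⁻¹) * g := by group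
          _ = y * g := by rw [h1]
      have hxD : x ∈ D := hOD x (MulAction.mem_orbit_self (M := ConjAct G) x)
      obtain ⟨z, hzO, hzx⟩ : ∃ z ∈ O, z ≠ x := by
        obtain ⟨z, hz⟩ : (O \ {x}).Nonempty := Set.nonempty_of_ncard_ne_zero (by rw [hS]; omega)
        exact ⟨z, hz.1, hz.2⟩
      have hDdvd : Nat.card D ∣ 25 := hcard ▸ Subgroup.card_dvd_of_le inf_le_left
      have hD1 : Nat.card D ≠ 1 := by
        intro h1
        rw [Subgroup.card_eq_one] at h1
        rw [h1] at hxD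
        exact hx1 (Subgroup.mem_bot.mp hxD)
      have hD5 : Nat.card D ≠ 5 := by
        intro h5
        have hxo : orderOf x = 5 := orderOf_eq_five' (hexp x hxQ) hx1
        have hzle : Subgroup.zpowers x ≤ D := Subgroup.zpowers_le.mpr hxD
        have hzcard : Nat.card (Subgroup.zpowers x) = 5 := by rw [Nat.card_zpowers, hxo]
        have heq : Subgroup.zpowers x = D :=
          Subgroup.eq_of_le_of_card_ge hzle (by rw [hzcard, h5])
        have hzD : z ∈ Subgroup.zpowers x := heq ▸ hOD z hzO
        exact hzx (orbit_conj_eq hoddG (hexp x hxQ)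
          (MulAction.mem_orbit_self (M := ConjAct G) x) hzO hzD)
      have hD25 : Nat.card D = 25 := by
        rcases dvd_25 hDdvd with h | h | h <;> first | exact h | exact absurd h (by assumption)
      have hDQ : D = commutator G :=
        Subgroup.eq_of_le_of_card_ge inf_le_left (by rw [hcard, hD25])
      rw [Subgroup.mem_centralizer_iff]
      intro q hq
      have hqD : q ∈ D := hDQ ▸ hq
      have := Subgroup.mem_centralizer_iff.mp (Subgroup.mem_inf.mp hqD).2 g rfl
      rw [this]
  rw [hCK, hKindex]
end

section
/- Let G be a finite group and p a prime such that the quotient G/C_G(G') is cyclic of order p. Then for every x ∈ G \ C_G(G'): the subgroup generated by x together with C_G(G') is all of G; the set [G,x] = {[y,x] : y ∈ G} equals [C_G(G'),x] = {[y,x] : y ∈ C_G(G')}; and the size of the conjugacy class Cl_G(x) divides |G'|. -/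
open scoped commutatorElement

/-- Let `G` be a finite group and `p` a prime such that the quotient
`G/C_G(G')` is cyclic of order `p` (equivalently, since every group of prime order is
cyclic, `|G : C_G(G')| = p`). Then for every `x ∈ G \ C_G(G')`: the subgroup generated
by `x` together with `C_G(G')` is all of `G`; the set `[G,x] = {[y,x] : y ∈ G}` equals
`[C_G(G'),x] = {[y,x] : y ∈ C_G(G')}`; and `|Cl_G(x)|` divides `|G'|`. -/
theorem of_index_centralizer_commutator_eq_prime (G : Type*) [Group G] [Finite G]
    (p : ℕ) (hp : p.Prime)
    (hidx : (Subgroup.centralizer (commutator G : Set G)).index = p) :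
    ∀ x : G, x ∉ Subgroup.centralizer (commutator G : Set G) →
      Subgroup.closure
          (insert x (Subgroup.centralizer (commutator G : Set G) : Set G)) = ⊤ ∧
      {z : G | ∃ y : G, z = ⁅y, x⁆} =
        {z : G | ∃ y ∈ Subgroup.centralizer (commutator G : Set G), z = ⁅y, x⁆} ∧
      Nat.card (MulAction.orbit (ConjAct G) x) ∣ Nat.card ↥(commutator G) := by
  intro x hx
  set C := Subgroup.centralizer (commutator G : Set G) with hCdef
  haveI hCnormal : C.Normal := inferInstance
  -- Part 1 : closure (insert x C) = ⊤
  have h1 : Subgroup.closure (insert x (C : Set G)) = ⊤ := by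
    set K := Subgroup.closure (insert x (C : Set G)) with hK
    have hCK : C ≤ K := fun g hg => Subgroup.subset_closure (Set.mem_insert_of_mem _ hg)
    have hxK : x ∈ K := Subgroup.subset_closure (Set.mem_insert _ _)
    have hdvd : K.index ∣ p := hidx ▸ Subgroup.index_dvd_of_le hCK
    rcases (Nat.Prime.eq_one_or_self_of_dvd hp _ hdvd) with h | h
    · exact Subgroup.index_eq_one.mp h
    · exfalso
      have hmul := Subgroup.relIndex_mul_index hCK
      rw [hidx, h] at hmul
      have : C.relIndex K = 1 :=
        Nat.eq_of_mul_eq_mul_right hp.pos (by rw [one_mul]; exact hmul)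
      exact hx (Subgroup.relIndex_eq_one.mp this hxK)
  -- decomposition : every y is c * x^k with c ∈ C
  have hdecomp : ∀ y : G, ∃ c ∈ C, ∃ k : ℤ, y = c * x ^ k := by
    have hcard : Nat.card (G ⧸ C) = p := by rw [← Subgroup.index_eq_card, hidx]
    have hxbar : (x : G ⧸ C) ≠ 1 := by
      simpa [QuotientGroup.eq_one_iff] using hx
    have horder : orderOf (x : G ⧸ C) = p := by
      have hdvd : orderOf (x : G ⧸ C) ∣ p := hcard ▸ orderOf_dvd_natCard _
      rcases hp.eq_one_or_self_of_dvd _ hdvd with h | h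
      · exact absurd (orderOf_eq_one_iff.mp h) hxbar
      · exact h
    have htop : Subgroup.zpowers (x : G ⧸ C) = ⊤ := by
      apply Subgroup.eq_top_of_card_eq
      rw [Nat.card_zpowers, horder, hcard]
    intro y
    have : (y : G ⧸ C) ∈ Subgroup.zpowers (x : G ⧸ C) := htop ▸ Subgroup.mem_top _
    obtain ⟨k, hk⟩ := this
    have hk' : ((x ^ k : G) : G ⧸ C) = (y : G ⧸ C) := by
      rw [← hk]; push_cast; rfl
    have hd : (x ^ k)⁻¹ * y ∈ C := QuotientGroup.eq.mp hk'
    refine ⟨x ^ k * ((x ^ k)⁻¹ * y) * (x ^ k)⁻¹, hCnormal.conj_mem _ hd _, k, by group⟩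
  -- Part 2 : set equality
  have h2 : {z : G | ∃ y : G, z = ⁅y, x⁆} =
      {z : G | ∃ y ∈ C, z = ⁅y, x⁆} := by
    ext z
    constructor
    · rintro ⟨y, rfl⟩
      obtain ⟨c, hc, k, rfl⟩ := hdecomp y
      refine ⟨c, hc, ?_⟩
      simp only [commutatorElement_def]
      group
    · rintro ⟨y, _, rfl⟩
      exact ⟨y, rfl⟩
  refine ⟨h1, h2, ?_⟩
  -- Part 3
  have hconj_mem : ∀ c : G, c ∈ C → ⁅c, x⁆ ∈ C := by
    intro c hc
    have h1 : x * c⁻¹ * x⁻¹ ∈ C := hCnormal.conj_mem _ (C.inv_mem hc) _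
    have : ⁅c, x⁆ = c * (x * c⁻¹ * x⁻¹) := by group
    rw [this]
    exact C.mul_mem hc h1
  have hcomm : ∀ (c : G), c ∈ C → ∀ g ∈ commutator G, Commute c g := by
    intro c hc g hg
    exact ((Subgroup.mem_centralizer_iff.mp hc) g hg).symm
  -- the commutator map on C is a homomorphism
  have hmul : ∀ a b : C, ⁅((a * b : C) : G), x⁆ = ⁅(a : G), x⁆ * ⁅(b : G), x⁆ := by
    intro a b
    have hbx : ⁅(b : G), x⁆ ∈ commutator G :=
      Subgroup.commutator_mem_commutator (Subgroup.mem_top _) (Subgroup.mem_top _)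
    have hax : ⁅(a : G), x⁆ ∈ commutator G :=
      Subgroup.commutator_mem_commutator (Subgroup.mem_top _) (Subgroup.mem_top _)
    have h1 : Commute (a : G) ⁅(b : G), x⁆ := hcomm _ a.2 _ hbx
    have h2 : Commute ⁅(a : G), x⁆ ⁅(b : G), x⁆ := hcomm _ (hconj_mem _ a.2) _ hbx
    have key : ⁅((a : G) * b), x⁆ = (↑a * ⁅(b : G), x⁆ * (↑a)⁻¹) * ⁅(a : G), x⁆ := by
      simp only [commutatorElement_def]
      group
    have h1' : (a : G) * ⁅(b : G), x⁆ * (a : G)⁻¹ = ⁅(b : G), x⁆ := by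
      rw [h1.eq]; group
    rw [Subgroup.coe_mul, key, h1']
    exact h2.eq.symm
  let φ : C →* G := MonoidHom.mk' (fun c => ⁅(c : G), x⁆) hmul
  have hrange : φ.range ≤ commutator G := by
    rintro _ ⟨c, rfl⟩
    exact Subgroup.commutator_mem_commutator (Subgroup.mem_top _) (Subgroup.mem_top _)
  have hcard_eq : Nat.card (MulAction.orbit (ConjAct G) x) = Nat.card φ.range := by
    apply Nat.card_congr
    refine ⟨fun z => ⟨(z : G) * x⁻¹, ?_⟩, fun s => ⟨(s : G) * x, ?_⟩, ?_, ?_⟩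
    · obtain ⟨z, hz⟩ := z
      obtain ⟨g, hg⟩ := hz
      have : z * x⁻¹ = ⁅ConjAct.ofConjAct g, x⁆ := by
        rw [← hg]
        show g • x * x⁻¹ = _
        rw [ConjAct.smul_def, commutatorElement_def]
      have hmemset : z * x⁻¹ ∈ {w : G | ∃ y ∈ C, w = ⁅y, x⁆} := by
        rw [← h2]; exact ⟨ConjAct.ofConjAct g, this⟩
      obtain ⟨c, hc, hceq⟩ := hmemset
      exact ⟨⟨c, hc⟩, hceq.symm⟩
    · obtain ⟨s, hs⟩ := s
      obtain ⟨c, hc⟩ := hs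
      refine ⟨ConjAct.toConjAct (c : G), ?_⟩
      show ConjAct.toConjAct (c : G) • x = s * x
      rw [ConjAct.smul_def, ConjAct.ofConjAct_toConjAct, ← hc]
      show (c : G) * x * (c : G)⁻¹ = ⁅(c : G), x⁆ * x
      group
    · intro z; ext; simp
    · intro s; ext; simp
  rw [hcard_eq]
  exact Subgroup.card_dvd_of_le hrange
end
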